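/- Suppose 0 < β < 1, 0 ≤ G(w̄) < 1, f is strictly concave with f' > 0, w̄ < Z, and dw̄/dR = 1 + M'_R / ((1/β - G(w̄)) · f'(w̄ - R)) with M'_R = -∫_{w̄}^{Z} f'(w'-R) g(w') dw' and ∫_{w̄}^{Z} g(w') dw' = 1 - G(w̄). Then 0 < dw̄/dR < 1. In particular dw̄/dR > (1-β)/(1 - β G(w̄)) > 0. -/

import Mathlib

/-!
Write `A = ∫_{w̄}^{Z} f'(w' - R) g(w') dw'` and `B = f'(w̄ - R)`, so that
`dw̄/dR = 1 - β A / ((1 - β G(w̄)) B)`. Since `f' > 0`, `A > 0`, giving `dw̄/dR < 1`; since `f'` is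
strictly decreasing, `A < B ∫ g = (1 - G(w̄)) B`, and substituting this bound gives
`dw̄/dR > 1 - β (1 - G(w̄)) / (1 - β G(w̄)) = (1 - β) / (1 - β G(w̄)) > 0`.
-/

open intervalIntegral Set

theorem integral_mul_lt_left_mul_integral_of_strictAntiOn {φ g : ℝ → ℝ} {a b : ℝ} (hab : a < b)
    (hφ : ContinuousOn φ (Icc a b)) (hφ_anti : StrictAntiOn φ (Icc a b))
    (hg : ContinuousOn g (Icc a b)) (hg_pos : ∀ x ∈ Icc a b, 0 < g x) :
    ∫ x in a..b, φ x * g x < φ a * ∫ x in a..b, g x := by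
  have ha : a ∈ Icc a b := left_mem_Icc.2 hab.le
  have hb : b ∈ Icc a b := right_mem_Icc.2 hab.le
  rw [← integral_const_mul]
  refine integral_lt_integral_of_continuousOn_of_le_of_exists_lt hab (hφ.mul hg)
    (continuousOn_const.mul hg) (fun x hx => ?_) ⟨b, hb, ?_⟩
  · exact mul_le_mul_of_nonneg_right (hφ_anti.antitoneOn ha (Ioc_subset_Icc_self hx) hx.1.le)
      (hg_pos x (Ioc_subset_Icc_self hx)).le
  · exact mul_lt_mul_of_pos_right (hφ_anti ha hb hab) (hg_pos b hb)

theorem one_sub_div_mem_Ioo_of_lt_mul {β G A B : ℝ} (hβ0 : 0 < β) (hβ1 : β < 1) (hG1 : G < 1)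
    (hB : 0 < B) (hA0 : 0 < A) (hA : A < (1 - G) * B) :
    (1 - β) / (1 - β * G) < 1 - A / ((1 / β - G) * B) ∧ 1 - A / ((1 / β - G) * B) < 1 := by
  have hβG : 0 < 1 - β * G := by nlinarith
  have hratio : A / ((1 / β - G) * B) = β * (A / B) / (1 - β * G) := by field_simp
  have hAB : A / B < 1 - G := (div_lt_iff₀ hB).2 hA
  constructor
  · calc (1 - β) / (1 - β * G) = 1 - β * (1 - G) / (1 - β * G) := by field_simp; ring
      _ < 1 - β * (A / B) / (1 - β * G) := by gcongr
      _ = 1 - A / ((1 / β - G) * B) := by rw [hratio]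
  · have : 0 < A / ((1 / β - G) * B) :=
      div_pos hA0 (mul_pos (by linarith [one_lt_one_div hβ0 hβ1]) hB)
    linarith

theorem mccall_reservation_wage_bounds_general
    (β Z R wbar Gw d : ℝ) (f g : ℝ → ℝ)
    (hβ0 : 0 < β) (hβ1 : β < 1)
    (hG1 : Gw < 1)
    (hf'pos : ∀ x, 0 < deriv f x)
    (hf'anti : StrictAnti (deriv f))
    (hf'c : Continuous (deriv f))
    (hg : Continuous g)
    (hgpos : ∀ x ∈ Set.Icc wbar Z, 0 < g x)
    (hwZ : wbar < Z)
    (hgint : (∫ w' in wbar..Z, g w') = 1 - Gw)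
    (hd : d = 1 + (-(∫ w' in wbar..Z, deriv f (w' - R) * g w'))
                    / ((1 / β - Gw) * deriv f (wbar - R))) :
    0 < d ∧ d < 1 ∧ (1 - β) / (1 - β * Gw) < d ∧ 0 < (1 - β) / (1 - β * Gw) := by
  have hφ : Continuous fun w => deriv f (w - R) := hf'c.comp (continuous_sub_right R)
  have hA0 : 0 < ∫ w' in wbar..Z, deriv f (w' - R) * g w' :=
    intervalIntegral_pos_of_pos_on ((hφ.mul hg).intervalIntegrable _ _)
      (fun x hx => mul_pos (hf'pos _) (hgpos x (Ioo_subset_Icc_self hx))) hwZ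
  have hA : ∫ w' in wbar..Z, deriv f (w' - R) * g w' < (1 - Gw) * deriv f (wbar - R) := by
    rw [mul_comm, ← hgint]
    exact integral_mul_lt_left_mul_integral_of_strictAntiOn hwZ hφ.continuousOn
      (fun x _ y _ hxy => hf'anti (sub_lt_sub_right hxy R)) hg.continuousOn hgpos
  rw [neg_div, ← sub_eq_add_neg] at hd
  obtain ⟨hlow, hup⟩ := one_sub_div_mem_Ioo_of_lt_mul hβ0 hβ1 hG1 (hf'pos _) hA0 hA
  have hpos : 0 < (1 - β) / (1 - β * Gw) := div_pos (by linarith) (by nlinarith)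
  subst hd
  exact ⟨hpos.trans hlow, hup, hlow, hpos⟩

/-- the reservation wage responds to the reference point
strictly positively, but less than one-for-one:
`(1-β)/(1-β G(w̄)) < dw̄/dR < 1` and `(1-β)/(1-β G(w̄)) > 0`. -/
theorem mccall_reservation_wage_bounds
    (β Z R wbar Gw d : ℝ) (f g : ℝ → ℝ)
    (hβ0 : 0 < β) (hβ1 : β < 1)
    (hG0 : 0 ≤ Gw) (hG1 : Gw < 1)
    (hf : Differentiable ℝ f)
    (hf'pos : ∀ x, 0 < deriv f x)
    (hf'anti : StrictAnti (deriv f))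
    (hf'c : Continuous (deriv f))
    (hg : Continuous g)
    (hgpos : ∀ x ∈ Set.Icc wbar Z, 0 < g x)
    (hwZ : wbar < Z)
    (hgint : (∫ w' in wbar..Z, g w') = 1 - Gw)
    (hd : d = 1 + (-(∫ w' in wbar..Z, deriv f (w' - R) * g w'))
                    / ((1 / β - Gw) * deriv f (wbar - R))) :
    0 < d ∧ d < 1 ∧ (1 - β) / (1 - β * Gw) < d ∧ 0 < (1 - β) / (1 - β * Gw) :=
  mccall_reservation_wage_bounds_general β Z R wbar Gw d f g hβ0 hβ1 hG1 hf'pos hf'anti hf'c hg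
    hgpos hwZ hgint hd
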